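/- arXiv:1707.01947 — 3 statements merged into one kernel-verified Lean document; each statement's English description precedes it below -/
import Mathlib

section
/- Define recursively for D = 1/2: p₀(τ) = 1, p₁ as the piecewise linear function √3(4τ−1) on [0,1/2) and √3(−4τ+3) on [1/2,1], and for i ≥ 2, pᵢ(τ) = ∫_{1/2}^{τ} p_{i−1}(η) dη − ∫₀¹ ∫_{1/2}^{τ'} p_{i−1}(η) dη dτ'. Then for every even i ≥ 2, pᵢ satisfies pᵢ(τ) = pᵢ(1/2 − τ) for all τ ∈ (0, 1/2), and for every odd i ≥ 3, pᵢ satisfies −pᵢ(τ) = pᵢ(1/2 − τ) for all τ ∈ (0, 1/2). -/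
/-!
Write `ε = (-1)^(i+1)`. By induction, `p = pwm (i+1)` satisfies `p (1 - x) = -ε p x` on all of `ℝ`
and `p (1/2 - x) = ε p x` on `[0, 1/2]`. A primitive based at the centre of a reflection flips the
sign of the symmetry, so `G τ = ∫_{1/2}^τ p` satisfies `G (1 - x) = ε G x`, and splitting at `1/4`
gives `G (1/2 - x) = (1 + ε) G (1/4) - ε G x` on `[0, 1/2]`. Integrating both identities shows that
the mean `c = ∫_0^1 G` satisfies `c = ε c` and `c = (1 + ε) G (1/4) / 2`, which is exactly what is
needed for `G - c` to have both symmetries with `-ε` in place of `ε`.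
-/

noncomputable def pwm : ℕ → ℝ → ℝ
  | 0 => fun _ => 1
  | 1 => fun τ => if τ < 1/2 then Real.sqrt 3 * (4 * τ - 1) else Real.sqrt 3 * (-4 * τ + 3)
  | (i + 2) => fun τ =>
      (∫ η in (1/2:ℝ)..τ, pwm (i + 1) η)
        - ∫ τ' in (0:ℝ)..1, (∫ η in (1/2:ℝ)..τ', pwm (i + 1) η)

open Set intervalIntegral
open scoped Interval

theorem integral_center_reflect {f : ℝ → ℝ} {a b s : ℝ}
    (h : ∀ x ∈ [[b, a / 2]], f (a - x) = s * f x) :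
    ∫ x in a / 2..a - b, f x = -s * ∫ x in a / 2..b, f x := by
  have hsub := integral_comp_sub_left f a (a := b) (b := a / 2)
  rw [show a - a / 2 = a / 2 by ring] at hsub
  rw [← hsub, integral_congr h, integral_const_mul, integral_symm]
  ring

def IsPWMSymmetric (ε : ℝ) (p : ℝ → ℝ) : Prop :=
  (∀ x, p (1 - x) = -ε * p x) ∧ ∀ x ∈ Icc (0 : ℝ) (1 / 2), p (1 / 2 - x) = ε * p x

noncomputable def halfPrimitive (p : ℝ → ℝ) (τ : ℝ) : ℝ := ∫ η in (1 / 2 : ℝ)..τ, p η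

theorem continuous_halfPrimitive {p : ℝ → ℝ} (hp : Continuous p) : Continuous (halfPrimitive p) :=
  continuous_primitive (fun a b => hp.intervalIntegrable a b) _

namespace IsPWMSymmetric

variable {ε : ℝ} {p : ℝ → ℝ}

theorem halfPrimitive_one_sub (h : IsPWMSymmetric ε p) (x : ℝ) :
    halfPrimitive p (1 - x) = ε * halfPrimitive p x := by
  rw [halfPrimitive, integral_center_reflect (a := 1) (s := -ε) fun y _ => h.1 y, neg_neg]
  rfl

theorem halfPrimitive_half_sub (hp : Continuous p) (h : IsPWMSymmetric ε p) {x : ℝ}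
    (hx : x ∈ Icc (0 : ℝ) (1 / 2)) :
    halfPrimitive p (1 / 2 - x) = (1 + ε) * halfPrimitive p (1 / 4) - ε * halfPrimitive p x := by
  have hsplit : ∀ y, halfPrimitive p y = halfPrimitive p (1 / 4) + ∫ η in (1 / 4 : ℝ)..y, p η :=
    fun y => (integral_add_adjacent_intervals (hp.intervalIntegrable _ _)
      (hp.intervalIntegrable _ _)).symm
  have hquarter : ∫ η in (1 / 4 : ℝ)..1 / 2 - x, p η = -ε * ∫ η in (1 / 4 : ℝ)..x, p η := by
    have := integral_center_reflect (f := p) (a := 1 / 2) (b := x) (s := ε) fun y hy => by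
      rcases mem_uIcc.1 hy with hy | hy <;>
        exact h.2 y ⟨by linarith [hx.1], by linarith [hx.2]⟩
    rwa [show (1 / 2 / 2 : ℝ) = 1 / 4 by norm_num] at this
  rw [hsplit (1 / 2 - x), hsplit x, hquarter]
  ring

theorem halfPrimitive_sub_integral (hp : Continuous p) (h : IsPWMSymmetric ε p) :
    IsPWMSymmetric (-ε) fun τ => halfPrimitive p τ - ∫ τ' in (0 : ℝ)..1, halfPrimitive p τ' := by
  have hG := continuous_halfPrimitive hp
  have hc_symm : ∫ x in (0 : ℝ)..1, halfPrimitive p x = ε * ∫ x in (0 : ℝ)..1, halfPrimitive p x :=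
    calc ∫ x in (0 : ℝ)..1, halfPrimitive p x
        = ∫ x in (0 : ℝ)..1, halfPrimitive p (1 - x) := by simp
      _ = ∫ x in (0 : ℝ)..1, ε * halfPrimitive p x :=
        integral_congr fun x _ => h.halfPrimitive_one_sub x
      _ = ε * ∫ x in (0 : ℝ)..1, halfPrimitive p x := integral_const_mul _ _
  have hI : ∫ x in (0 : ℝ)..1 / 2, halfPrimitive p x
      = (1 + ε) * halfPrimitive p (1 / 4) / 2 - ε * ∫ x in (0 : ℝ)..1 / 2, halfPrimitive p x :=
    calc ∫ x in (0 : ℝ)..1 / 2, halfPrimitive p x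
        = ∫ x in (0 : ℝ)..1 / 2, halfPrimitive p (1 / 2 - x) := by simp
      _ = ∫ x in (0 : ℝ)..1 / 2, ((1 + ε) * halfPrimitive p (1 / 4) - ε * halfPrimitive p x) :=
        integral_congr fun x hx => h.halfPrimitive_half_sub hp (by simpa using hx)
      _ = _ := by
        rw [integral_sub intervalIntegrable_const ((hG.intervalIntegrable _ _).const_mul ε),
          integral_const, integral_const_mul, smul_eq_mul]
        ring
  have hc : ∫ x in (0 : ℝ)..1, halfPrimitive p x
      = (1 + ε) * ∫ x in (0 : ℝ)..1 / 2, halfPrimitive p x :=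
    calc ∫ x in (0 : ℝ)..1, halfPrimitive p x
        = (∫ x in (0 : ℝ)..1 / 2, halfPrimitive p x) + ∫ x in (1 / 2 : ℝ)..1, halfPrimitive p x :=
          (integral_add_adjacent_intervals (hG.intervalIntegrable _ _)
            (hG.intervalIntegrable _ _)).symm
      _ = (∫ x in (0 : ℝ)..1 / 2, halfPrimitive p x)
          + ∫ x in (0 : ℝ)..1 / 2, halfPrimitive p (1 - x) := by
        rw [integral_comp_sub_left]; norm_num
      _ = _ := by
        rw [integral_congr fun x _ => h.halfPrimitive_one_sub x, integral_const_mul]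
        ring
  refine ⟨fun x => ?_, fun x hx => ?_⟩ <;> dsimp only
  · rw [h.halfPrimitive_one_sub x]
    linear_combination -hc_symm
  · rw [h.halfPrimitive_half_sub hp hx]
    linear_combination hc_symm - 2 * hc - 2 * hI

end IsPWMSymmetric

theorem pwm_one_eq : pwm 1 = fun τ => Real.sqrt 3 * (1 - |4 * τ - 2|) := by
  funext τ
  change (if τ < 1 / 2 then _ else _) = _
  split_ifs with h
  · rw [abs_of_nonpos (by linarith)]; ring
  · rw [abs_of_nonneg (by linarith)]; ring

theorem continuous_pwm : ∀ i, Continuous (pwm i)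
  | 0 => continuous_const
  | 1 => by rw [pwm_one_eq]; fun_prop
  | i + 2 => (continuous_halfPrimitive (continuous_pwm (i + 1))).sub continuous_const

theorem isPWMSymmetric_pwm_one : IsPWMSymmetric (-1) (pwm 1) := by
  rw [pwm_one_eq]
  refine ⟨fun x => ?_, fun x hx => ?_⟩ <;> dsimp only
  · rw [show 4 * (1 - x) - 2 = -(4 * x - 2) by ring, abs_neg]; ring
  · rw [show 4 * (1 / 2 - x) - 2 = -(4 * x) by ring, abs_neg, abs_of_nonneg (by linarith [hx.1]),
      abs_of_nonpos (by linarith [hx.2])]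
    ring

theorem isPWMSymmetric_pwm : ∀ i : ℕ, IsPWMSymmetric ((-1) ^ (i + 1)) (pwm (i + 1))
  | 0 => by simpa using isPWMSymmetric_pwm_one
  | i + 1 => by
    rw [pow_succ, mul_neg_one]
    exact (isPWMSymmetric_pwm i).halfPrimitive_sub_integral (continuous_pwm _)

theorem stmt3 :
    ∀ i : ℕ,
      (2 ≤ i → Even i → ∀ τ ∈ Set.Ioo (0:ℝ) (1/2), pwm i τ = pwm i (1/2 - τ)) ∧
      (3 ≤ i → Odd i → ∀ τ ∈ Set.Ioo (0:ℝ) (1/2), -pwm i τ = pwm i (1/2 - τ)) := by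
  rintro (_ | j)
  · simp
  have hrefl : ∀ τ ∈ Ioo (0 : ℝ) (1 / 2), pwm (j + 1) (1 / 2 - τ) = (-1) ^ (j + 1) * pwm (j + 1) τ :=
    fun τ hτ => (isPWMSymmetric_pwm j).2 τ (Ioo_subset_Icc_self hτ)
  refine ⟨fun _ hev τ hτ => ?_, fun _ hodd τ hτ => ?_⟩
  · rw [hrefl τ hτ, hev.neg_one_pow, one_mul]
  · rw [hrefl τ hτ, hodd.neg_one_pow, neg_one_mul]
end

section
/- Let f : [0,1] → ℝ be continuous with −f(τ) = f(1/2 − τ) for τ ∈ (0,1/2) and −f(τ) = f(τ + 1/2) for τ ∈ (0,1/2). Then F(τ) = ∫_{1/2}^{τ} f(η) dη satisfies F(τ) = F(1/2 − τ) for all τ ∈ (0, 1/2) and −F(τ) = F(τ + 1/2) for all τ ∈ (0, 1/2), and ∫₀¹ F(τ) dτ = 0. -/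
/-!
By the substitution rule, oddness of `f` about `1/4` makes it integrate to zero over every
interval symmetric about `1/4`, and antiperiodicity turns an integral over a translate by `1/2`
into the negative of the original one. The first fact gives the evenness of `F` about `1/4` and
`F 0 = 0`; the latter is what lets antiperiodicity pass from `f` to `F`. The two halves of
`∫₀¹ F` then cancel by the antiperiodicity of `F`.
-/

open Set MeasureTheory intervalIntegral

section Symmetry

variable {E : Type*} [NormedAddCommGroup E] [NormedSpace ℝ E] {f : ℝ → E} {a b p : ℝ}

theorem intervalIntegral_eq_zero_of_reflect_eq_neg
    (h : ∀ x ∈ uIoo a b, f (a + b - x) = -f x) : ∫ x in a..b, f x = 0 := by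
  have hreflect : ∫ x in a..b, f (a + b - x) = ∫ x in a..b, f x := by
    rw [integral_comp_sub_left, add_sub_cancel_right, add_sub_cancel_left]
  have hneg : ∫ x in a..b, f (a + b - x) = -∫ x in a..b, f x := by
    rw [← intervalIntegral.integral_neg]
    exact integral_congr_uIoo h
  rw [hreflect, eq_neg_iff_add_eq_zero, ← two_smul ℝ] at hneg
  exact (smul_eq_zero.mp hneg).resolve_left two_ne_zero

theorem intervalIntegral_add_eq_neg_of_antiperiodic
    (h : ∀ x ∈ uIoo a b, f (x + p) = -f x) :
    ∫ x in (a + p)..(b + p), f x = -∫ x in a..b, f x := by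
  rw [← integral_comp_add_right, ← intervalIntegral.integral_neg]
  exact integral_congr_uIoo h

theorem intervalIntegral_eq_zero_of_antiperiodic
    (hf : IntervalIntegrable f volume a (a + 2 * p))
    (h : ∀ x ∈ uIoo a (a + p), f (x + p) = -f x) : ∫ x in a..(a + 2 * p), f x = 0 := by
  have hmid : a + p ∈ uIcc a (a + 2 * p) := by
    rcases le_total 0 p with hp | hp
    · exact mem_uIcc.mpr (.inl ⟨by linarith, by linarith⟩)
    · exact mem_uIcc.mpr (.inr ⟨by linarith, by linarith⟩)
  have hsplit := integral_add_adjacent_intervals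
    (hf.mono_set (uIcc_subset_uIcc left_mem_uIcc hmid))
    (hf.mono_set (uIcc_subset_uIcc hmid right_mem_uIcc))
  rw [← hsplit, show a + 2 * p = a + p + p by ring,
    intervalIntegral_add_eq_neg_of_antiperiodic h, add_neg_cancel]

end Symmetry

section HalfPeriod

variable {f : ℝ → ℝ}

theorem integral_from_half_eq_integral_from_half_sub (hc : ContinuousOn f (Icc 0 1))
    (hodd : ∀ τ ∈ Ioo (0:ℝ) (1/2), -f τ = f (1/2 - τ)) {τ : ℝ} (hτ : τ ∈ Ioo (0:ℝ) (1/2)) :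
    ∫ η in (1/2:ℝ)..τ, f η = ∫ η in (1/2:ℝ)..(1/2 - τ), f η := by
  obtain ⟨hτ₀, hτ₁⟩ := hτ
  have hsub : uIoo (1/2 - τ) τ ⊆ Ioo 0 (1/2) :=
    uIoo_subset_Ioo ⟨by linarith, by linarith⟩ ⟨by linarith, by linarith⟩
  rw [← sub_eq_zero, integral_interval_sub_left
    (hc.mono (uIcc_subset_Icc ⟨by norm_num, by norm_num⟩ ⟨hτ₀.le, by linarith⟩)).intervalIntegrable
    (hc.mono (uIcc_subset_Icc ⟨by norm_num, by norm_num⟩ ⟨by linarith, by linarith⟩)).intervalIntegrable]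
  refine intervalIntegral_eq_zero_of_reflect_eq_neg fun x hx => ?_
  rw [hodd x (hsub hx)]
  ring_nf

theorem integral_zero_half_eq_zero_of_reflect_eq_neg
    (hodd : ∀ τ ∈ Ioo (0:ℝ) (1/2), -f τ = f (1/2 - τ)) : ∫ η in (0:ℝ)..(1/2), f η = 0 := by
  refine intervalIntegral_eq_zero_of_reflect_eq_neg fun x hx => ?_
  rw [uIoo_of_le (by norm_num)] at hx
  rw [hodd x hx, zero_add]

theorem neg_integral_from_half_eq_integral_from_half_add (hc : ContinuousOn f (Icc 0 1))
    (hodd : ∀ τ ∈ Ioo (0:ℝ) (1/2), -f τ = f (1/2 - τ))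
    (hanti : ∀ τ ∈ Ioo (0:ℝ) (1/2), -f τ = f (τ + 1/2)) {τ : ℝ} (hτ : τ ∈ Ioo (0:ℝ) (1/2)) :
    -∫ η in (1/2:ℝ)..τ, f η = ∫ η in (1/2:ℝ)..(τ + 1/2), f η := by
  obtain ⟨hτ₀, hτ₁⟩ := hτ
  have hshift : ∫ η in (0 + 1/2:ℝ)..(τ + 1/2), f η = -∫ η in (0:ℝ)..τ, f η :=
    intervalIntegral_add_eq_neg_of_antiperiodic fun x hx =>
      (hanti x (uIoo_subset_Ioo ⟨le_rfl, by norm_num⟩ ⟨hτ₀.le, hτ₁.le⟩ hx)).symm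
  rw [zero_add] at hshift
  rw [hshift, ← integral_interval_sub_left
    (hc.mono (uIcc_subset_Icc ⟨le_rfl, zero_le_one⟩ ⟨hτ₀.le, by linarith⟩)).intervalIntegrable
    (hc.mono (uIcc_subset_Icc ⟨le_rfl, zero_le_one⟩ ⟨by norm_num, by norm_num⟩)).intervalIntegrable,
    integral_zero_half_eq_zero_of_reflect_eq_neg hodd, sub_zero]

end HalfPeriod

theorem stmt13 (f : ℝ → ℝ) (hc : ContinuousOn f (Set.Icc (0:ℝ) 1))
    (hodd : ∀ τ ∈ Set.Ioo (0:ℝ) (1/2), -f τ = f (1/2 - τ))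
    (hanti : ∀ τ ∈ Set.Ioo (0:ℝ) (1/2), -f τ = f (τ + 1/2)) :
    (∀ τ ∈ Set.Ioo (0:ℝ) (1/2),
        (∫ η in (1/2:ℝ)..τ, f η) = ∫ η in (1/2:ℝ)..(1/2 - τ), f η) ∧
      (∀ τ ∈ Set.Ioo (0:ℝ) (1/2),
        -(∫ η in (1/2:ℝ)..τ, f η) = ∫ η in (1/2:ℝ)..(τ + 1/2), f η) ∧
      (∫ τ in (0:ℝ)..1, ∫ η in (1/2:ℝ)..τ, f η) = 0 := by
  have hF : ContinuousOn (fun τ => ∫ η in (1/2:ℝ)..τ, f η) (uIcc 0 1) :=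
    continuousOn_primitive_interval' (hc.intervalIntegrable_of_Icc zero_le_one)
      (by rw [uIcc_of_le zero_le_one]; norm_num)
  have hmean := intervalIntegral_eq_zero_of_antiperiodic (a := 0) (p := 1/2)
    (by norm_num; exact hF.intervalIntegrable)
    fun x hx => (neg_integral_from_half_eq_integral_from_half_add hc hodd hanti
      (by rwa [zero_add, uIoo_of_le (by norm_num)] at hx)).symm
  refine ⟨fun τ hτ => integral_from_half_eq_integral_from_half_sub hc hodd hτ,
    fun τ hτ => neg_integral_from_half_eq_integral_from_half_add hc hodd hanti hτ, ?_⟩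
  norm_num at hmean
  exact hmean
end

section
/- Let A, B ∈ ℝ^{n×n}, and let {p_k}_{k=0}^{N} be L²([0,1]) functions with Gram matrix I = T_s·∫₀¹ P(τ)P(τ)ᵀ dτ and stiffness matrix Q = −∫₀¹ P'(τ)P(τ)ᵀ dτ, where P(τ) = (p₀(τ),…,p_N(τ))ᵀ and f_s = 1/T_s. If x̂ʰ_j(t₁,t₂) = Σ_k p_k(τ(t₂)) w_{j,k}(t₁) with τ(t₂) = t₂/T_s mod 1, then the Galerkin conditions ∫₀^{T_s} [A(∂x̂ʰ/∂t₁ + ∂x̂ʰ/∂t₂) + B x̂ʰ − ĉ]·p_l(τ(t₂)) dt₂ = 0 for all l are equivalent to the ODE system (A ⊗ I)·dW/dt₁ + (B ⊗ I + A ⊗ Q)·W(t₁) = C(t₁), where ⊗ denotes the Kronecker product and W stacks the coefficient vectors. -/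
open Matrix MeasureTheory

/-!
On `(0, Ts)` the sawtooth `τ t₂ = fract (t₂ / Ts)` coincides with `t₂ / Ts` almost
everywhere, so substituting `s = t₂ / Ts` turns the `(i, l)` Galerkin condition into `Ts` times
an integral over `[0, 1]` of products of basis functions, which is linear in `W` and `W'`.
The terms `p_k p_l` produce the Gram matrix; the terms `fs p'_k p_l` produce the stiffness
matrix, since `Ts · fs = 1` and integration by parts with `p_k 0 = p_k 1` gives
`∫ p'_k p_l = -∫ p'_l p_k = Q l k`. What remains is component `(i, l)` of the Kronecker
system minus `C (i, l)`.
-/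

theorem ae_fract_div_eq_div_of_mem_uIoc {T : ℝ} (hT : 0 < T) :
    ∀ᵐ t ∂volume, t ∈ Set.uIoc 0 T → Int.fract (t / T) = t / T := by
  filter_upwards [compl_mem_ae_iff.2 (measure_singleton T)] with t (ht : t ≠ T) hmem
  rw [Set.uIoc_of_le hT.le] at hmem
  exact Int.fract_eq_self.mpr
    ⟨div_nonneg hmem.1.le hT.le, (div_lt_one hT).mpr (hmem.2.lt_of_ne ht)⟩

theorem integral_deriv_mul_eq_neg_deriv_mul_of_periodic {u v u' v' : ℝ → ℝ} {a b : ℝ}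
    (hu : ∀ x ∈ Set.uIcc a b, HasDerivAt u (u' x) x)
    (hv : ∀ x ∈ Set.uIcc a b, HasDerivAt v (v' x) x)
    (hu' : IntervalIntegrable u' volume a b) (hv' : IntervalIntegrable v' volume a b)
    (hua : u a = u b) (hva : v a = v b) :
    ∫ x in a..b, u' x * v x = -∫ x in a..b, v' x * u x := by
  have h := intervalIntegral.integral_mul_deriv_eq_deriv_mul hv hu hv' hu'
  rw [hua, hva, sub_self, zero_sub] at h
  rw [← h]
  exact intervalIntegral.integral_congr fun x _ => mul_comm _ _

theorem kroneckerMap_mul_mulVec_apply {R ι ι' κ κ' : Type*} [CommSemiring R] [Fintype ι']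
    [Fintype κ'] (A : Matrix ι ι' R) (M : Matrix κ κ' R) (w : ι' × κ' → R) (i : ι)
    (l : κ) :
    (kroneckerMap (· * ·) A M *ᵥ w) (i, l) = ∑ jk, A i jk.1 * M l jk.2 * w jk := rfl

theorem galerkin_residual_mul_eq_sum {R ι κ : Type*} [CommRing R] [Fintype ι] [Fintype κ]
    (A B : Matrix ι ι R) (U V : ι → κ → R) (P P' : κ → R) (f c q : R) (i : ι) :
    ((A *ᵥ fun j => ∑ k, (P k * U j k + f * P' k * V j k)) i
        + (B *ᵥ fun j => ∑ k, P k * V j k) i - c) * q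
      = ∑ jk : ι × κ, ((A i jk.1 * U jk.1 jk.2 + B i jk.1 * V jk.1 jk.2) * (q * P jk.2)
          + A i jk.1 * (f * V jk.1 jk.2) * (P' jk.2 * q)) - c * q := by
  simp only [mulVec, dotProduct, Fintype.sum_prod_type, Finset.mul_sum, Finset.sum_mul,
    ← Finset.sum_add_distrib, sub_mul]
  congr 1
  refine Finset.sum_congr rfl fun j _ => Finset.sum_congr rfl fun k _ => ?_
  ring

theorem galerkin_residual_integral {ι κ : Type*} [Fintype ι] [Fintype κ] {Ts : ℝ}
    (hTs : 0 < Ts) {p p' : κ → ℝ → ℝ} (hp : ∀ k x, HasDerivAt (p k) (p' k x) x)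
    (hp'c : ∀ k, Continuous (p' k)) (hper : ∀ k, p k 0 = p k 1)
    {c : ℝ → ℝ} (hc : IntervalIntegrable c volume 0 Ts)
    (A B : Matrix ι ι ℝ) (U V : ι → κ → ℝ) (i : ι) (l : κ) :
    ∫ t in (0:ℝ)..Ts,
        ((A *ᵥ fun j => ∑ k, (p k (Int.fract (t / Ts)) * U j k
            + 1 / Ts * p' k (Int.fract (t / Ts)) * V j k)) i
          + (B *ᵥ fun j => ∑ k, p k (Int.fract (t / Ts)) * V j k) i - c t)
          * p l (Int.fract (t / Ts))
      = (∑ jk : ι × κ, ((A i jk.1 * U jk.1 jk.2 + B i jk.1 * V jk.1 jk.2)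
            * (Ts * ∫ s in (0:ℝ)..1, p l s * p jk.2 s)
          + A i jk.1 * V jk.1 jk.2 * -∫ s in (0:ℝ)..1, p' l s * p jk.2 s))
        - ∫ t in (0:ℝ)..Ts, c t * p l (Int.fract (t / Ts)) := by
  have hpc (k : κ) : Continuous (p k) :=
    continuous_iff_continuousAt.2 fun x => (hp k x).continuousAt
  let g : ι × κ → ℝ → ℝ := fun jk s =>
    (A i jk.1 * U jk.1 jk.2 + B i jk.1 * V jk.1 jk.2) * (p l s * p jk.2 s)
      + A i jk.1 * (1 / Ts * V jk.1 jk.2) * (p' jk.2 s * p l s)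
  have hg (jk : ι × κ) : Continuous (g jk) := by fun_prop
  have hc_fract : ∫ t in (0:ℝ)..Ts, c t * p l (Int.fract (t / Ts))
      = ∫ t in (0:ℝ)..Ts, c t * p l (t / Ts) :=
    intervalIntegral.integral_congr_ae <| by
      filter_upwards [ae_fract_div_eq_div_of_mem_uIoc hTs] with t ht hmem
      rw [ht hmem]
  have hparts (k : κ) :
      ∫ s in (0:ℝ)..1, p' k s * p l s = -∫ s in (0:ℝ)..1, p' l s * p k s :=
    integral_deriv_mul_eq_neg_deriv_mul_of_periodic (fun x _ => hp k x) (fun x _ => hp l x)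
      ((hp'c k).intervalIntegrable 0 1) ((hp'c l).intervalIntegrable 0 1) (hper k) (hper l)
  calc _ = ∫ t in (0:ℝ)..Ts, ((∑ jk, g jk (t / Ts)) - c t * p l (t / Ts)) :=
        intervalIntegral.integral_congr_ae <| by
          filter_upwards [ae_fract_div_eq_div_of_mem_uIoc hTs] with t ht hmem
          rw [ht hmem, galerkin_residual_mul_eq_sum]
    _ = Ts * (∑ jk, ∫ s in (0:ℝ)..1, g jk s) - ∫ t in (0:ℝ)..Ts, c t * p l (t / Ts) := by
      have hgTs : Continuous fun t => ∑ jk, g jk (t / Ts) := by fun_prop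
      have hplTs : Continuous fun t => p l (t / Ts) := by fun_prop
      rw [intervalIntegral.integral_sub (hgTs.intervalIntegrable 0 Ts)
          (hc.mul_continuousOn hplTs.continuousOn),
        intervalIntegral.integral_comp_div (fun s => ∑ jk, g jk s) hTs.ne', zero_div,
        div_self hTs.ne', smul_eq_mul,
        intervalIntegral.integral_finsetSum fun jk _ => (hg jk).intervalIntegrable 0 1]
    _ = _ := by
      rw [hc_fract, Finset.mul_sum]
      congr 1
      refine Finset.sum_congr rfl fun jk _ => ?_
      have hpp : Continuous fun s => p l s * p jk.2 s := by fun_prop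
      have hp'p : Continuous fun s => p' jk.2 s * p l s := by fun_prop
      rw [intervalIntegral.integral_add ((hpp.const_mul _).intervalIntegrable 0 1)
          ((hp'p.const_mul _).intervalIntegrable 0 1),
        intervalIntegral.integral_const_mul, intervalIntegral.integral_const_mul, hparts]
      field_simp

theorem stmt14 (n N : ℕ) (A B : Matrix (Fin n) (Fin n) ℝ)
    (Ts : ℝ) (hTs : 0 < Ts)
    (p p' : Fin (N + 1) → ℝ → ℝ)
    (hp : ∀ k τ, HasDerivAt (p k) (p' k τ) τ)
    (hp'c : ∀ k, Continuous (p' k))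
    (hper : ∀ k, p k 0 = p k 1)
    (cc : ℝ × ℝ → Fin n → ℝ)
    (hcc : ∀ t₁ i, IntervalIntegrable (fun t₂ => cc (t₁, t₂) i) volume 0 Ts)
    (W W' : ℝ → Fin n → Fin (N + 1) → ℝ) :
    -- fast relative time
    let τ : ℝ → ℝ := fun t₂ => Int.fract (t₂ / Ts)
    let fs : ℝ := 1 / Ts
    -- Gram and "stiffness" matrices
    let Imat : Matrix (Fin (N + 1)) (Fin (N + 1)) ℝ :=
      fun k l => Ts * ∫ s in (0:ℝ)..1, p k s * p l s
    let Q : Matrix (Fin (N + 1)) (Fin (N + 1)) ℝ :=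
      fun k l => -∫ s in (0:ℝ)..1, p' k s * p l s
    -- Galerkin expansion and its multirate derivative
    let xh : ℝ → ℝ → Fin n → ℝ :=
      fun t₁ t₂ j => ∑ k, p k (τ t₂) * W t₁ j k
    let dxh : ℝ → ℝ → Fin n → ℝ :=
      fun t₁ t₂ j => ∑ k, (p k (τ t₂) * W' t₁ j k + fs * p' k (τ t₂) * W t₁ j k)
    -- right-hand side
    let C : ℝ → Fin n × Fin (N + 1) → ℝ :=
      fun t₁ il => ∫ t₂ in (0:ℝ)..Ts, cc (t₁, t₂) il.1 * p il.2 (τ t₂)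
    ((∀ (t₁ : ℝ) (i : Fin n) (l : Fin (N + 1)),
        (∫ t₂ in (0:ℝ)..Ts,
          (A.mulVec (dxh t₁ t₂) i + B.mulVec (xh t₁ t₂) i - cc (t₁, t₂) i)
            * p l (τ t₂)) = 0)
      ↔ (∀ t₁ : ℝ,
          (Matrix.kroneckerMap (· * ·) A Imat).mulVec (fun jk => W' t₁ jk.1 jk.2)
            + (Matrix.kroneckerMap (· * ·) B Imat
                + Matrix.kroneckerMap (· * ·) A Q).mulVec (fun jk => W t₁ jk.1 jk.2)
          = C t₁)) := by
  intro τ fs Imat Q xh dxh C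
  have residual (t₁ : ℝ) (i : Fin n) (l : Fin (N + 1)) :
      (∫ t₂ in (0:ℝ)..Ts,
          (A.mulVec (dxh t₁ t₂) i + B.mulVec (xh t₁ t₂) i - cc (t₁, t₂) i)
            * p l (τ t₂))
        = ((Matrix.kroneckerMap (· * ·) A Imat).mulVec (fun jk => W' t₁ jk.1 jk.2)
            + (Matrix.kroneckerMap (· * ·) B Imat
              + Matrix.kroneckerMap (· * ·) A Q).mulVec (fun jk => W t₁ jk.1 jk.2)) (i, l)
          - C t₁ (i, l) := by
    rw [galerkin_residual_integral hTs hp hp'c hper (hcc t₁ i) A B (W' t₁) (W t₁) i l]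
    simp only [Pi.add_apply, add_mulVec, kroneckerMap_mul_mulVec_apply,
      ← Finset.sum_add_distrib]
    congr 1
    refine Finset.sum_congr rfl fun jk _ => ?_
    simp only [Imat, Q]
    ring
  simp only [residual, sub_eq_zero, funext_iff, Prod.forall]
end
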